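/- arXiv:1502.06528 — 2 statements merged into one kernel-verified Lean document; each statement's English description precedes it below -/
import Mathlib

section
/- Let f : Finset (Fin n) → ℝ be weakly-α-supermodular with α ≥ 1, let k ≥ 1 be a natural number, let S* ⊆ Fin n with |S*| ≤ k, let E be a real with 0 < E ≤ f(S₀), and let S : ℕ → Finset (Fin n) be a greedy extension sequence for f starting from S₀. Set τ = ⌈α·k·ln(f(S₀)/E)⌉. Then |S τ| ≤ |S₀| + τ and f(S τ) ≤ f(S*) + E. -/
/-- A set function `f` is weakly-`α`-supermodular if it is nonnegative, nonincreasing,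
and for all `S T` with `T \ S` nonempty,
`f S - f (S ∪ T) ≤ α * |T \ S| * max_{i ∈ T \ S} (f S - f (S ∪ {i}))`. -/
def WeaklySupermodular {n : ℕ} (α : ℝ) (f : Finset (Fin n) → ℝ) : Prop :=
  (∀ S : Finset (Fin n), 0 ≤ f S) ∧
  (∀ S T : Finset (Fin n), S ⊆ T → f T ≤ f S) ∧
  (∀ (S T : Finset (Fin n)) (h : (T \ S).Nonempty),
    f S - f (S ∪ T) ≤
      α * ((T \ S).card : ℝ) * (T \ S).sup' h (fun i => f S - f (S ∪ {i})))

/-- `S` is a greedy extension sequence for `f` starting from `S₀`: `S 0 = S₀` and each step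
adds an element minimizing `f (S t ∪ {i})` over all `i`. -/
def GreedySeq {n : ℕ} (f : Finset (Fin n) → ℝ) (S₀ : Finset (Fin n))
    (S : ℕ → Finset (Fin n)) : Prop :=
  S 0 = S₀ ∧
  ∀ t : ℕ, ∃ i : Fin n,
    S (t + 1) = S t ∪ {i} ∧ ∀ j : Fin n, f (S t ∪ {i}) ≤ f (S t ∪ {j})

/-!
Let `g` be the gap `f S - f S*` between the current set and the competitor. Adding all of `S*`
closes the gap, so by weak `α`-supermodularity some single element of `S* \ S` gains at least
`g / (α k)`; the greedy choice gains at least as much. Hence the gap shrinks by the factor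
`1 - 1 / (α k) ≤ exp (-1 / (α k))` per step, and after `⌈α k log (f S₀ / E)⌉` steps it is at
most `f S₀ · E / f S₀ = E`.
-/

open Finset

theorem one_sub_inv_pow_ceil_mul_log_mul_le {a c E : ℝ} (ha : 0 ≤ a) (hE : 0 < E) (hc : 1 ≤ c) :
    (1 - c⁻¹) ^ ⌈c * Real.log (a / E)⌉₊ * a ≤ E := by
  set τ := ⌈c * Real.log (a / E)⌉₊
  have hc₀ : 0 < c := one_pos.trans_le hc
  have hr₀ : 0 ≤ 1 - c⁻¹ := sub_nonneg.2 (inv_le_one_of_one_le₀ hc)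
  rcases le_or_gt a E with haE | hEa
  · calc (1 - c⁻¹) ^ τ * a ≤ 1 * a := by
          gcongr
          exact pow_le_one₀ hr₀ (by linarith [inv_nonneg.2 hc₀.le])
      _ ≤ E := by linarith
  have hlog : Real.log (a / E) ≤ τ / c := (le_div_iff₀ hc₀).2 (by
    rw [mul_comm]; exact Nat.le_ceil _)
  calc (1 - c⁻¹) ^ τ * a ≤ Real.exp (-c⁻¹) ^ τ * a := by
        gcongr
        linarith [Real.add_one_le_exp (-c⁻¹)]
    _ = Real.exp (-(τ / c)) * a := by rw [← Real.exp_nat_mul]; ring_nf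
    _ ≤ Real.exp (-Real.log (a / E)) * a := by gcongr
    _ = E := by
        rw [Real.exp_neg, Real.exp_log (div_pos (hE.trans hEa) hE), inv_div,
          div_mul_cancel₀ _ (hE.trans hEa).ne']

namespace WeaklySupermodular

variable {n : ℕ} {α : ℝ} {f : Finset (Fin n) → ℝ}

theorem nonneg (hf : WeaklySupermodular α f) (S : Finset (Fin n)) : 0 ≤ f S := hf.1 S

theorem antitone (hf : WeaklySupermodular α f) : Antitone f := hf.2.1

theorem exists_sub_le_mul_gain (hf : WeaklySupermodular α f) (hα : 0 ≤ α)
    {S Sstar : Finset (Fin n)} {k : ℕ} (hSstar : Sstar.card ≤ k) (hlt : f Sstar < f S) :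
    ∃ i, f S - f Sstar ≤ α * k * (f S - f (S ∪ {i})) := by
  have hne : (Sstar \ S).Nonempty :=
    sdiff_nonempty.2 fun hsub => (hf.antitone hsub).not_gt hlt
  obtain ⟨i, -, hi⟩ := exists_mem_eq_sup' hne fun i => f S - f (S ∪ {i})
  refine ⟨i, ?_⟩
  have hgain : 0 ≤ f S - f (S ∪ {i}) := sub_nonneg.2 (hf.antitone subset_union_left)
  have hcard : ((Sstar \ S).card : ℝ) ≤ k := by
    exact_mod_cast (card_le_card sdiff_subset).trans hSstar
  calc f S - f Sstar ≤ f S - f (S ∪ Sstar) := by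
        linarith [hf.antitone (subset_union_right (s₁ := S) (s₂ := Sstar))]
    _ ≤ α * (Sstar \ S).card * (f S - f (S ∪ {i})) := hi ▸ hf.2.2 S Sstar hne
    _ ≤ α * k * (f S - f (S ∪ {i})) := by gcongr

theorem sub_le_of_forall_le_union_singleton (hf : WeaklySupermodular α f) (hα : 0 ≤ α)
    {S Sstar : Finset (Fin n)} {k : ℕ} (hSstar : Sstar.card ≤ k) (hαk : 0 < α * k) {i : Fin n}
    (hi : ∀ j, f (S ∪ {i}) ≤ f (S ∪ {j})) :
    f (S ∪ {i}) - f Sstar ≤ (1 - (α * k)⁻¹) * (f S - f Sstar) := by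
  have hstep : f (S ∪ {i}) ≤ f S := hf.antitone subset_union_left
  rcases le_or_gt (f S) (f Sstar) with hle | hlt
  · have : 0 ≤ (α * k)⁻¹ * (f Sstar - f S) := mul_nonneg (inv_nonneg.2 hαk.le) (by linarith)
    linarith
  obtain ⟨j, hj⟩ := hf.exists_sub_le_mul_gain hα hSstar hlt
  have hgain : (f S - f Sstar) / (α * k) ≤ f S - f (S ∪ {i}) := by
    rw [div_le_iff₀' hαk]
    exact hj.trans (mul_le_mul_of_nonneg_left (by linarith [hi j]) hαk.le)
  rw [sub_mul, one_mul, inv_mul_eq_div]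
  linarith

end WeaklySupermodular

namespace GreedySeq

variable {n : ℕ} {f : Finset (Fin n) → ℝ} {S₀ : Finset (Fin n)} {S : ℕ → Finset (Fin n)}

theorem card_le (hS : GreedySeq f S₀ S) (t : ℕ) : (S t).card ≤ S₀.card + t := by
  induction t with
  | zero => simp [hS.1]
  | succ t ih =>
    obtain ⟨i, hi, -⟩ := hS.2 t
    rw [hi]
    exact (card_union_le _ _).trans (by simp only [card_singleton]; omega)

theorem sub_le_pow_mul {α : ℝ} (hS : GreedySeq f S₀ S) (hf : WeaklySupermodular α f)
    (hα : 0 ≤ α) {Sstar : Finset (Fin n)} {k : ℕ} (hSstar : Sstar.card ≤ k) (hαk : 1 ≤ α * k)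
    (t : ℕ) : f (S t) - f Sstar ≤ (1 - (α * k)⁻¹) ^ t * (f S₀ - f Sstar) := by
  induction t with
  | zero => simp [hS.1]
  | succ t ih =>
    obtain ⟨i, hi, hmin⟩ := hS.2 t
    rw [hi, pow_succ', mul_assoc]
    exact (hf.sub_le_of_forall_le_union_singleton hα hSstar (one_pos.trans_le hαk) hmin).trans
      (mul_le_mul_of_nonneg_left ih (sub_nonneg.2 (inv_le_one_of_one_le₀ hαk)))

end GreedySeq

theorem greedy_extension_guarantee_general
    (n : ℕ) (α : ℝ) (hα : 1 ≤ α) (f : Finset (Fin n) → ℝ)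
    (hf : WeaklySupermodular α f)
    (k : ℕ) (hk : 1 ≤ k)
    (Sstar : Finset (Fin n)) (hSstar : Sstar.card ≤ k)
    (S₀ : Finset (Fin n)) (E : ℝ) (hE : 0 < E)
    (S : ℕ → Finset (Fin n)) (hS : GreedySeq f S₀ S)
    (τ : ℕ) (hτ : τ = ⌈α * (k : ℝ) * Real.log (f S₀ / E)⌉₊) :
    (S τ).card ≤ S₀.card + τ ∧ f (S τ) ≤ f Sstar + E := by
  refine ⟨hS.card_le τ, ?_⟩
  have hαk : 1 ≤ α * k := one_le_mul_of_one_le_of_one_le hα (by exact_mod_cast hk)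
  have hgap := hS.sub_le_pow_mul hf (by linarith) hSstar hαk τ
  have hdecay := one_sub_inv_pow_ceil_mul_log_mul_le (hf.nonneg S₀) hE hαk
  rw [← hτ] at hdecay
  have hr : 0 ≤ (1 - (α * k)⁻¹) ^ τ := pow_nonneg (sub_nonneg.2 (inv_le_one_of_one_le₀ hαk)) τ
  calc f (S τ) ≤ f Sstar + (1 - (α * k)⁻¹) ^ τ * (f S₀ - f Sstar) := by linarith
    _ ≤ f Sstar + (1 - (α * k)⁻¹) ^ τ * f S₀ := by gcongr; linarith [hf.nonneg Sstar]
    _ ≤ f Sstar + E := by linarith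

/-- Main guarantee of the greedy extension algorithm: after `τ = ⌈α k ln(f S₀ / E)⌉`
steps, the solution has at most `|S₀| + τ` elements and value at most `f S* + E`. -/
theorem greedy_extension_guarantee
    (n : ℕ) (α : ℝ) (hα : 1 ≤ α) (f : Finset (Fin n) → ℝ)
    (hf : WeaklySupermodular α f)
    (k : ℕ) (hk : 1 ≤ k)
    (Sstar : Finset (Fin n)) (hSstar : Sstar.card ≤ k)
    (S₀ : Finset (Fin n)) (E : ℝ) (hE : 0 < E) (hE' : E ≤ f S₀)
    (S : ℕ → Finset (Fin n)) (hS : GreedySeq f S₀ S)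
    (τ : ℕ) (hτ : τ = ⌈α * (k : ℝ) * Real.log (f S₀ / E)⌉₊) :
    (S τ).card ≤ S₀.card + τ ∧ f (S τ) ≤ f Sstar + E :=
  greedy_extension_guarantee_general n α hα f hf k hk Sstar hSstar S₀ E hE S hS τ hτ
end

section
/- Let x_1, …, x_n ∈ ℝ^m be unit vectors that are α-well-conditioned for some α ≥ 1, and define the column subset selection objective f(S) = Σ_{j=1}^n dist(x_j, span{x_i : i ∈ S})². Let k ≥ 1, let S* ⊆ Fin n with |S*| ≤ k and f(S*) > 0, let ρ ≥ 1 and δ > 0 with δ ≤ ρ, and suppose S₀ ⊆ Fin n satisfies f(S₀) ≤ ρ · f(S*). Then there exists S ⊆ Fin n with S₀ ⊆ S, |S| ≤ |S₀| + ⌈α · k · ln(ρ/δ)⌉, and f(S) ≤ (1 + δ) · f(S*). -/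
/-!
Let `K` be the span of the columns chosen so far and `r_j` the residual of column `j` off `K`,
so that `f(S) = ∑ ‖r_j‖²`. The columns of `S*` lie in `K ⊔ V`, where `V ⟂ K` is spanned by the
residuals of `S* \ S`, and these residuals are still `α`-well-conditioned. Hence
`f(S) - f(S*) ≤ ∑_j ‖P_V r_j‖² ≤ α ∑_{i ∈ S* \ S} ∑_j ⟪r_j, r_i⟫²`. Adding column `i` lowers `f`
by at least `∑_j ⟪r_j, r_i⟫²` because `‖r_i‖ ≤ 1`, so the best of the at most `k` candidates
closes a `1/(αk)` fraction of the gap `f(S) - f(S*)`. After `t ≥ αk log(ρ/δ)` steps the gap has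
been multiplied by `(1 - 1/(αk))^t ≤ δ/ρ`, and it was at most `(ρ - 1) f(S*)` to begin with.
-/

open Metric Submodule Finset RealInnerProductSpace

variable {ι E : Type*} [NormedAddCommGroup E] [InnerProductSpace ℝ E]

instance Submodule.finiteDimensional_span_image_finset (x : ι → E) (S : Finset ι) :
    FiniteDimensional ℝ (span ℝ (x '' ↑S)) :=
  FiniteDimensional.span_of_finite ℝ (S.finite_toSet.image x)

namespace Submodule

theorem infDist_eq_norm_sub_starProjection (K : Submodule ℝ E) [K.HasOrthogonalProjection]
    (v : E) : infDist v K = ‖v - K.starProjection v‖ := by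
  rw [infDist_eq_iInf, starProjection_minimal]
  simp only [dist_eq_norm]
  rfl

theorem infDist_sq_eq (K : Submodule ℝ E) [K.HasOrthogonalProjection] (v : E) :
    infDist v K ^ 2 = ‖v‖ ^ 2 - ‖K.starProjection v‖ ^ 2 := by
  rw [infDist_eq_norm_sub_starProjection, ← starProjection_orthogonal_val,
    K.norm_sq_eq_add_norm_sq_starProjection v]
  ring

theorem infDist_sub_starProjection_le {K V W : Submodule ℝ E} [K.HasOrthogonalProjection]
    (hVK : V ≤ Kᗮ) (hW : W ≤ K ⊔ V) (v : E) :
    infDist (v - K.starProjection v) V ≤ infDist v W := by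
  refine (le_infDist ⟨0, W.zero_mem⟩).2 fun y hy ↦ ?_
  obtain ⟨a, ha, b, hb, rfl⟩ := mem_sup.1 (hW hy)
  have hproj : Kᗮ.starProjection (v - (a + b)) = v - K.starProjection v - b :=
    eq_starProjection_of_mem_orthogonal' (Kᗮ.sub_mem (sub_starProjection_mem_orthogonal v) (hVK hb))
      (K.le_orthogonal_orthogonal (K.sub_mem (K.starProjection_apply_mem v) ha)) (by abel)
  calc infDist (v - K.starProjection v) V ≤ ‖v - K.starProjection v - b‖ := by
        simpa [dist_eq_norm] using infDist_le_dist_of_mem (SetLike.mem_coe.2 hb)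
    _ ≤ dist v (a + b) := by rw [dist_eq_norm, ← hproj]; exact norm_starProjection_apply_le _ _

end Submodule

theorem infDist_sq_le_norm_sub_sq_sub_inner_sq {W : Submodule ℝ E} {p u : E} (hp : p ∈ W)
    (hu : u ∈ W) (hu1 : ‖u‖ ≤ 1) (v : E) :
    infDist v W ^ 2 ≤ ‖v - p‖ ^ 2 - ⟪v - p, u⟫ ^ 2 := by
  have hdist : infDist v W ≤ ‖v - p - ⟪v - p, u⟫ • u‖ := by
    simpa [dist_eq_norm, sub_sub] using
      infDist_le_dist_of_mem (x := v) (SetLike.mem_coe.2 (W.add_mem hp (W.smul_mem ⟪v - p, u⟫ hu)))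
  have hexpand : ‖v - p - ⟪v - p, u⟫ • u‖ ^ 2
      = ‖v - p‖ ^ 2 - 2 * ⟪v - p, u⟫ ^ 2 + ⟪v - p, u⟫ ^ 2 * ‖u‖ ^ 2 := by
    rw [norm_sub_sq_real, real_inner_smul_right, norm_smul, Real.norm_eq_abs, mul_pow, sq_abs]
    ring
  have hu2 : ‖u‖ ^ 2 ≤ 1 := pow_le_one₀ (norm_nonneg u) hu1
  nlinarith [pow_le_pow_left₀ infDist_nonneg hdist 2, sq_nonneg ⟪v - p, u⟫]

theorem Finset.exists_superset_sub_le_pow_mul {f : Finset ι → ℝ} {q b : ℝ} (hq : 0 ≤ q)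
    (hstep : ∀ S, ∃ S', S ⊆ S' ∧ S'.card ≤ S.card + 1 ∧ f S' - b ≤ q * (f S - b))
    (S₀ : Finset ι) (t : ℕ) :
    ∃ S, S₀ ⊆ S ∧ S.card ≤ S₀.card + t ∧ f S - b ≤ q ^ t * (f S₀ - b) := by
  induction t with
  | zero => exact ⟨S₀, subset_rfl, le_rfl, by simp⟩
  | succ t ih =>
    obtain ⟨S, hS₀S, hcard, hS⟩ := ih
    obtain ⟨S', hSS', hcard', hS'⟩ := hstep S
    refine ⟨S', hS₀S.trans hSS', by omega, ?_⟩
    calc f S' - b ≤ q * (f S - b) := hS'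
      _ ≤ q * (q ^ t * (f S₀ - b)) := by gcongr
      _ = q ^ (t + 1) * (f S₀ - b) := by ring

theorem Real.one_sub_inv_pow_le_inv {a y : ℝ} {t : ℕ} (ha : 1 ≤ a) (hy : 0 < y)
    (ht : a * Real.log y ≤ t) : (1 - a⁻¹) ^ t ≤ y⁻¹ := calc
  (1 - a⁻¹) ^ t ≤ Real.exp (-a⁻¹) ^ t :=
      pow_le_pow_left₀ (sub_nonneg.2 (inv_le_one_of_one_le₀ ha))
        (by linarith [Real.add_one_le_exp (-a⁻¹)]) t
  _ = Real.exp (-(t / a)) := by rw [← Real.exp_nat_mul]; ring_nf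
  _ ≤ Real.exp (-Real.log y) := by
      gcongr
      rwa [le_div_iff₀ (by positivity), mul_comm]
  _ = y⁻¹ := by rw [Real.exp_neg, Real.exp_log hy]

def IsWellConditioned (α : ℝ) (v : ι → E) (s : Finset ι) : Prop :=
  ∀ c : ι → ℝ, ∑ i ∈ s, c i ^ 2 ≤ α * ‖∑ i ∈ s, c i • v i‖ ^ 2

namespace IsWellConditioned

variable {α : ℝ} {x : ι → E}

theorem of_supported (hα : 0 < α)
    (h : ∀ (s : Finset ι) (w : ι → ℝ), (∀ i ∉ s, w i = 0) →
      (1 / α) * ∑ i ∈ s, w i ^ 2 ≤ ‖∑ i ∈ s, w i • x i‖ ^ 2)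
    (s : Finset ι) : IsWellConditioned α x s := by
  classical
  intro c
  have key := h s (fun i ↦ if i ∈ s then c i else 0) fun i hi ↦ if_neg hi
  simp only [ite_pow, ite_smul, zero_pow two_ne_zero, zero_smul, sum_ite_mem, inter_self] at key
  rwa [one_div, inv_mul_le_iff₀ hα] at key

theorem sub_of_mem_span [DecidableEq ι] {S T : Finset ι} (hx : IsWellConditioned α x (T ∪ S))
    (hST : Disjoint T S) {y : ι → E} (hy : ∀ i ∈ T, y i ∈ span ℝ (x '' ↑S)) :
    IsWellConditioned α (fun i ↦ x i - y i) T := by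
  intro c
  obtain ⟨d, hd⟩ := (mem_span_image_finset_iff_exists_fun' ℝ).1
    (sum_mem fun i hi ↦ smul_mem _ (c i) (hy i hi) : ∑ i ∈ T, c i • y i ∈ span ℝ (x '' ↑S))
  set w : ι → ℝ := fun i ↦ if i ∈ T then c i else -d i
  have hwT : ∀ i ∈ T, w i = c i := fun i hi ↦ if_pos hi
  have hwS : ∀ i ∈ S, w i = -d i := fun i hi ↦ if_neg (disjoint_right.1 hST hi)
  have hcomb : ∑ i ∈ T ∪ S, w i • x i = ∑ i ∈ T, c i • (x i - y i) := calc
    _ = ∑ i ∈ T, c i • x i + ∑ i ∈ S, (-d i) • x i := by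
        rw [sum_union hST]
        congr 1 <;> refine sum_congr rfl fun i hi ↦ ?_
        · rw [hwT i hi]
        · rw [hwS i hi]
    _ = ∑ i ∈ T, c i • (x i - y i) := by
        simp only [neg_smul, sum_neg_distrib, hd, smul_sub, sum_sub_distrib, ← sub_eq_add_neg]
  calc ∑ i ∈ T, c i ^ 2 = ∑ i ∈ T, w i ^ 2 := sum_congr rfl fun i hi ↦ by rw [hwT i hi]
    _ ≤ ∑ i ∈ T ∪ S, w i ^ 2 :=
        sum_le_sum_of_subset_of_nonneg subset_union_left fun _ _ _ ↦ sq_nonneg _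
    _ ≤ α * ‖∑ i ∈ T, c i • (x i - y i)‖ ^ 2 := hcomb ▸ hx w

theorem norm_starProjection_sq_le (hα : 0 ≤ α) {s : Finset ι} (hx : IsWellConditioned α x s)
    (u : E) : ‖(span ℝ (x '' ↑s)).starProjection u‖ ^ 2 ≤ α * ∑ i ∈ s, ⟪u, x i⟫ ^ 2 := by
  set p := (span ℝ (x '' ↑s)).starProjection u
  have hp : p ∈ span ℝ (x '' ↑s) := starProjection_apply_mem _ u
  obtain ⟨c, hc⟩ := (mem_span_image_finset_iff_exists_fun' ℝ).1 hp
  have hself : ‖p‖ ^ 2 = ∑ i ∈ s, c i * ⟪u, x i⟫ := by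
    have h := starProjection_inner_eq_zero u p hp
    rw [inner_sub_left, sub_eq_zero] at h
    rw [← real_inner_self_eq_norm_sq, ← h, ← hc, inner_sum]
    simp only [real_inner_smul_right]
  have hcs := sum_mul_sq_le_sq_mul_sq s c fun i ↦ ⟪u, x i⟫
  have hc2 := hx c
  rw [hc] at hc2
  rw [← hself] at hcs
  rcases (sq_nonneg ‖p‖).eq_or_lt with h0 | hpos
  · rw [← h0]; exact mul_nonneg hα (sum_nonneg fun _ _ ↦ sq_nonneg _)
  · refine le_of_mul_le_mul_right ?_ hpos
    nlinarith [sum_nonneg fun i (_ : i ∈ s) ↦ sq_nonneg ⟪u, x i⟫]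

end IsWellConditioned

noncomputable def cssResidual (x : ι → E) (S : Finset ι) (j : ι) : E :=
  x j - (span ℝ (x '' ↑S)).starProjection (x j)

theorem norm_cssResidual_le (x : ι → E) (S : Finset ι) (j : ι) : ‖cssResidual x S j‖ ≤ ‖x j‖ := by
  rw [cssResidual, ← starProjection_orthogonal_val]
  exact norm_starProjection_apply_le _ _

theorem span_image_le_sup_span_cssResidual [DecidableEq ι] (x : ι → E) (S T : Finset ι) :
    span ℝ (x '' ↑T) ≤ span ℝ (x '' ↑S) ⊔ span ℝ (cssResidual x S '' ↑(T \ S)) := by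
  refine span_le.2 ?_
  rintro _ ⟨i, hiT, rfl⟩
  by_cases hiS : i ∈ S
  · exact mem_sup_left (subset_span ⟨i, hiS, rfl⟩)
  · rw [← add_sub_cancel ((span ℝ (x '' ↑S)).starProjection (x i)) (x i)]
    exact add_mem (mem_sup_left (starProjection_apply_mem _ _))
      (mem_sup_right (subset_span ⟨i, mem_sdiff.2 ⟨hiT, hiS⟩, rfl⟩))

variable [Fintype ι]

noncomputable def cssObjective (x : ι → E) (S : Finset ι) : ℝ :=
  ∑ j, infDist (x j) (span ℝ (x '' ↑S) : Set E) ^ 2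

theorem cssObjective_nonneg (x : ι → E) (S : Finset ι) : 0 ≤ cssObjective x S :=
  sum_nonneg fun _ _ ↦ sq_nonneg _

theorem cssObjective_eq_sum_norm_cssResidual_sq (x : ι → E) (S : Finset ι) :
    cssObjective x S = ∑ j, ‖cssResidual x S j‖ ^ 2 := by
  simp only [cssObjective, infDist_eq_norm_sub_starProjection, cssResidual]

theorem cssObjective_insert_le [DecidableEq ι] (x : ι → E) (S : Finset ι) {i : ι}
    (hxi : ‖x i‖ ≤ 1) :
    cssObjective x (insert i S) ≤
      cssObjective x S - ∑ j, ⟪cssResidual x S j, cssResidual x S i⟫ ^ 2 := by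
  have hle : span ℝ (x '' ↑S) ≤ span ℝ (x '' ↑(insert i S)) :=
    span_mono (Set.image_mono (coe_subset.2 (subset_insert i S)))
  have hri : cssResidual x S i ∈ span ℝ (x '' ↑(insert i S)) :=
    sub_mem (subset_span ⟨i, mem_insert_self i S, rfl⟩) (hle (starProjection_apply_mem _ _))
  rw [cssObjective, cssObjective_eq_sum_norm_cssResidual_sq x S, ← sum_sub_distrib]
  exact sum_le_sum fun j _ ↦ infDist_sq_le_norm_sub_sq_sub_inner_sq
    (hle (starProjection_apply_mem _ (x j))) hri ((norm_cssResidual_le x S i).trans hxi) (x j)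

theorem cssObjective_sub_le [DecidableEq ι] {α : ℝ} (hα : 0 ≤ α) {x : ι → E}
    {S Sstar : Finset ι} (hx : IsWellConditioned α x (Sstar ∪ S)) :
    cssObjective x S - cssObjective x Sstar ≤
      α * ∑ i ∈ Sstar \ S, ∑ j, ⟪cssResidual x S j, cssResidual x S i⟫ ^ 2 := by
  set r := cssResidual x S
  set V := span ℝ (r '' ↑(Sstar \ S))
  rw [← sdiff_union_self_eq_union] at hx
  have hV : IsWellConditioned α r (Sstar \ S) :=
    hx.sub_of_mem_span sdiff_disjoint fun i _ ↦ starProjection_apply_mem _ (x i)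
  have hVK : V ≤ (span ℝ (x '' ↑S))ᗮ :=
    span_le.2 <| by rintro _ ⟨i, -, rfl⟩; exact sub_starProjection_mem_orthogonal (x i)
  have hj : ∀ j, ‖r j‖ ^ 2 - α * ∑ i ∈ Sstar \ S, ⟪r j, r i⟫ ^ 2
      ≤ infDist (x j) (span ℝ (x '' ↑Sstar)) ^ 2 := fun j ↦ calc
    _ ≤ ‖r j‖ ^ 2 - ‖V.starProjection (r j)‖ ^ 2 := by
        linarith [hV.norm_starProjection_sq_le hα (r j)]
    _ = infDist (r j) V ^ 2 := (infDist_sq_eq V _).symm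
    _ ≤ infDist (x j) (span ℝ (x '' ↑Sstar)) ^ 2 := pow_le_pow_left₀ infDist_nonneg
        (infDist_sub_starProjection_le hVK (span_image_le_sup_span_cssResidual x S Sstar) (x j)) 2
  have hsum := sum_le_sum fun j (_ : j ∈ univ) ↦ hj j
  rw [sum_sub_distrib] at hsum
  rw [cssObjective_eq_sum_norm_cssResidual_sq, cssObjective, sum_comm, mul_sum]
  linarith

theorem exists_superset_cssObjective_sub_le [DecidableEq ι] {α : ℝ} (hα : 0 ≤ α) {x : ι → E}
    (hnorm : ∀ i, ‖x i‖ ≤ 1) {S Sstar : Finset ι} (hx : IsWellConditioned α x (Sstar ∪ S))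
    {k : ℕ} (hk : Sstar.card ≤ k) :
    ∃ S' : Finset ι, S ⊆ S' ∧ S'.card ≤ S.card + 1 ∧
      cssObjective x S' - cssObjective x Sstar ≤
        (1 - (α * k)⁻¹) * (cssObjective x S - cssObjective x Sstar) := by
  set g : ι → ℝ := fun i ↦ ∑ j, ⟪cssResidual x S j, cssResidual x S i⟫ ^ 2
  have hlow : cssObjective x S - cssObjective x Sstar ≤ α * ∑ i ∈ Sstar \ S, g i :=
    cssObjective_sub_le hα hx
  have hαk : 0 ≤ (α * k)⁻¹ := by positivity
  have hg : ∀ i, 0 ≤ g i := fun i ↦ by positivity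
  rcases (Sstar \ S).eq_empty_or_nonempty with hT | hT
  · refine ⟨S, subset_rfl, S.card.le_succ, ?_⟩
    rw [hT, sum_empty, mul_zero] at hlow
    linarith [mul_nonneg hαk (neg_nonneg.2 hlow)]
  obtain ⟨i, -, hmax⟩ := exists_max_image _ g hT
  have hsum : ∑ i ∈ Sstar \ S, g i ≤ k * g i := calc
    _ ≤ (Sstar \ S).card • g i := sum_le_card_nsmul (Sstar \ S) g (g i) hmax
    _ ≤ k * g i := by
        rw [nsmul_eq_mul]
        gcongr
        exact_mod_cast (card_le_card sdiff_subset).trans hk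
  have hgain : (cssObjective x S - cssObjective x Sstar) / (α * k) ≤ g i :=
    div_le_of_le_mul₀ (by positivity) (hg i)
      (hlow.trans ((mul_le_mul_of_nonneg_left hsum hα).trans_eq (by ring)))
  refine ⟨insert i S, subset_insert i S, card_insert_le i S, ?_⟩
  have hinsert := cssObjective_insert_le x S (hnorm i)
  rw [div_eq_inv_mul] at hgain
  linarith

theorem column_subset_selection_greedy_general
    (m n : ℕ) (α : ℝ) (hα : 1 ≤ α)
    (x : Fin n → EuclideanSpace ℝ (Fin m)) (hx : ∀ i, ‖x i‖ = 1)
    (hcond : ∀ (S : Finset (Fin n)) (w : Fin n → ℝ), (∀ i ∉ S, w i = 0) →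
      (1 / α) * ∑ i ∈ S, (w i) ^ 2 ≤ ‖∑ i ∈ S, w i • x i‖ ^ 2)
    (f : Finset (Fin n) → ℝ)
    (hf : ∀ S : Finset (Fin n), f S = ∑ j : Fin n,
      (Metric.infDist (x j)
        (Submodule.span ℝ (x '' ↑S) : Set (EuclideanSpace ℝ (Fin m)))) ^ 2)
    (k : ℕ) (hk : 1 ≤ k)
    (Sstar : Finset (Fin n)) (hSstar : Sstar.card ≤ k)
    (ρ δ : ℝ) (hρ : 1 ≤ ρ) (hδ : 0 < δ)
    (S₀ : Finset (Fin n)) (hS₀ : f S₀ ≤ ρ * f Sstar) :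
    ∃ S : Finset (Fin n), S₀ ⊆ S ∧
      S.card ≤ S₀.card + ⌈α * (k : ℝ) * Real.log (ρ / δ)⌉₊ ∧
      f S ≤ (1 + δ) * f Sstar := by
  obtain rfl : f = cssObjective x := funext hf
  have hα₀ : 0 < α := by linarith
  have hαk : 1 ≤ α * k := one_le_mul_of_one_le_of_one_le hα (by exact_mod_cast hk)
  set q := 1 - (α * k)⁻¹
  set t := ⌈α * (k : ℝ) * Real.log (ρ / δ)⌉₊
  have hq : 0 ≤ q := sub_nonneg.2 (inv_le_one_of_one_le₀ hαk)
  have hqt : q ^ t ≤ δ / ρ := by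
    simpa only [inv_div] using
      Real.one_sub_inv_pow_le_inv hαk (div_pos (by linarith) hδ) (Nat.le_ceil _)
  obtain ⟨S, hS₀S, hcard, hS⟩ := Finset.exists_superset_sub_le_pow_mul hq
    (fun S ↦ exists_superset_cssObjective_sub_le hα₀.le (fun i ↦ (hx i).le)
      (IsWellConditioned.of_supported hα₀ hcond _) hSstar) S₀ t
  refine ⟨S, hS₀S, hcard, ?_⟩
  set fstar := cssObjective x Sstar
  have hfstar : 0 ≤ fstar := cssObjective_nonneg x Sstar
  calc cssObjective x S ≤ fstar + q ^ t * ((ρ - 1) * fstar) := by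
        linarith [mul_le_mul_of_nonneg_left (by linarith : cssObjective x S₀ - fstar
          ≤ (ρ - 1) * fstar) (pow_nonneg hq t)]
    _ ≤ fstar + δ / ρ * (ρ - 1) * fstar := by
        rw [mul_assoc]
        gcongr
    _ ≤ fstar + δ * fstar := by
        gcongr
        rw [div_mul_eq_mul_div, div_le_iff₀ (by positivity)]
        linarith
    _ = (1 + δ) * fstar := by ring

/-- Bicriteria guarantee for column subset selection: starting from a `ρ`-approximate
solution `S₀`, a greedy extension with at most `⌈α k ln(ρ/δ)⌉` additional columns is a
`(1+δ)`-approximation. -/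
theorem column_subset_selection_greedy
    (m n : ℕ) (α : ℝ) (hα : 1 ≤ α)
    (x : Fin n → EuclideanSpace ℝ (Fin m)) (hx : ∀ i, ‖x i‖ = 1)
    (hcond : ∀ (S : Finset (Fin n)) (w : Fin n → ℝ), (∀ i ∉ S, w i = 0) →
      (1 / α) * ∑ i ∈ S, (w i) ^ 2 ≤ ‖∑ i ∈ S, w i • x i‖ ^ 2)
    (f : Finset (Fin n) → ℝ)
    (hf : ∀ S : Finset (Fin n), f S = ∑ j : Fin n,
      (Metric.infDist (x j)
        (Submodule.span ℝ (x '' ↑S) : Set (EuclideanSpace ℝ (Fin m)))) ^ 2)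
    (k : ℕ) (hk : 1 ≤ k)
    (Sstar : Finset (Fin n)) (hSstar : Sstar.card ≤ k) (hpos : 0 < f Sstar)
    (ρ δ : ℝ) (hρ : 1 ≤ ρ) (hδ : 0 < δ) (hδρ : δ ≤ ρ)
    (S₀ : Finset (Fin n)) (hS₀ : f S₀ ≤ ρ * f Sstar) :
    ∃ S : Finset (Fin n), S₀ ⊆ S ∧
      S.card ≤ S₀.card + ⌈α * (k : ℝ) * Real.log (ρ / δ)⌉₊ ∧
      f S ≤ (1 + δ) * f Sstar :=
  column_subset_selection_greedy_general m n α hα x hx hcond f hf k hk Sstar hSstar ρ δ hρ hδ S₀ hS₀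
end
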